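/- Let x0 ∈ ℝ³ and 0 < ρ0 < ρ1 < ρ. Let ψ ∈ C_c^∞(ℝ³; ℝ) with supp ψ ⊂ B(x0, ρ) and ∇ψ(x) = 0 for every x ∈ B(x0, ρ1). Let u ∈ L²(ℝ³; ℝ³). Define β : B(x0, ρ0) → ℝ³ by β(x) := (1/4π) ∫_{ℝ³} ((x − y)/|x − y|³) ( u(y) · ∇ψ(y) ) dy − (1/4π) ∫_{ℝ³} ((x − y)/|x − y|³) ∧ ( ∇ψ(y) ∧ u(y) ) dy; both integrals converge absolutely, since the integrands vanish unless ρ1 ≤ |y − x0| < ρ, so that |x − y| ≥ ρ1 − ρ0 for x ∈ B(x0, ρ0). Then there exists a constant C > 0 depending only on ρ0, ρ1, ρ such that β is Lipschitz on B(x0, ρ0) with Lipschitz constant at most C ‖∇ψ‖_{L²(B(x0,ρ))} ‖u‖_{L²(B(x0,ρ))}. -/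

import Mathlib

/-!
For `x ∈ B(x0, ρ0)` only points `y` with `|x - y| ≥ ρ1 - ρ0` contribute to `β(x)`, because the
densities `u · ∇ψ` and `∇ψ ∧ u` vanish on `B(x0, ρ1)`. There the kernel `z ↦ z / |z|³` is bounded
by `(ρ1 - ρ0)⁻²` and `4 (ρ1 - ρ0)⁻³`-Lipschitz. Both integrands are images of the kernel and of a
density under a bilinear map of norm at most one, and the densities are dominated by `|∇ψ| |u|`,
whose integral is at most `‖∇ψ‖_{L²(B(x0,ρ))} ‖u‖_{L²(B(x0,ρ))}` by Cauchy–Schwarz, since `∇ψ`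
vanishes outside `B(x0, ρ)`.
-/

open MeasureTheory Filter Metric
open scoped Topology RealInnerProductSpace ENNReal

noncomputable section

abbrev E3 : Type := EuclideanSpace ℝ (Fin 3)

def cross3 (a b : E3) : E3 :=
  (EuclideanSpace.equiv (Fin 3) ℝ).symm
    ![a 1 * b 2 - a 2 * b 1, a 2 * b 0 - a 0 * b 2, a 0 * b 1 - a 1 * b 0]

def harmCorr (ψ : E3 → ℝ) (u : E3 → E3) (x : E3) : E3 :=
  (4 * Real.pi)⁻¹ •
      (∫ y : E3, ((‖x - y‖ ^ 3)⁻¹ * ⟪u y, gradient ψ y⟫) • (x - y))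
    - (4 * Real.pi)⁻¹ •
      (∫ y : E3, cross3 ((‖x - y‖ ^ 3)⁻¹ • (x - y)) (cross3 (gradient ψ y) (u y)))

section Gradient

variable {𝕜 F : Type*} [RCLike 𝕜] [NormedAddCommGroup F] [InnerProductSpace 𝕜 F] [CompleteSpace F]
  {f : F → 𝕜}

theorem support_gradient_subset (f : F → 𝕜) : Function.support (gradient f) ⊆ tsupport f := by
  intro x hx
  refine support_fderiv_subset 𝕜 fun h => hx ?_
  simp [gradient, h]

theorem HasCompactSupport.gradient (hf : HasCompactSupport f) : HasCompactSupport (gradient f) :=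
  hf.mono' (support_gradient_subset f)

theorem ContDiff.continuous_gradient {n : WithTop ℕ∞} (hf : ContDiff 𝕜 n f) (hn : n ≠ 0) :
    Continuous (gradient f) :=
  (InnerProductSpace.toDual 𝕜 F).symm.continuous.comp (hf.continuous_fderiv hn)

end Gradient

section InverseSquareKernel

variable {E : Type*} [NormedAddCommGroup E] [NormedSpace ℝ E]

theorem norm_inv_norm_pow_three_smul (a : E) : ‖(‖a‖ ^ 3)⁻¹ • a‖ = (‖a‖ ^ 2)⁻¹ := by
  rcases eq_or_ne a 0 with rfl | ha
  · simp
  rw [norm_smul, norm_inv, norm_pow, norm_norm]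
  field_simp [norm_ne_zero_iff.2 ha]

theorem norm_inv_norm_pow_three_smul_sub_le {d : ℝ} (hd : 0 < d) {a b : E} (ha : d ≤ ‖a‖)
    (hb : d ≤ ‖b‖) :
    ‖(‖a‖ ^ 3)⁻¹ • a - (‖b‖ ^ 3)⁻¹ • b‖ ≤ 4 / d ^ 3 * ‖a - b‖ := by
  set s := ‖a‖
  set t := ‖b‖
  have hs : 0 < s := hd.trans_le ha
  have ht : 0 < t := hd.trans_le hb
  have hsplit :
      (s ^ 3)⁻¹ • a - (t ^ 3)⁻¹ • b = (s ^ 3)⁻¹ • (a - b) + ((s ^ 3)⁻¹ - (t ^ 3)⁻¹) • b := by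
    module
  have hfactor : ((s ^ 3)⁻¹ - (t ^ 3)⁻¹) * t
      = (t - s) * ((s ^ 3)⁻¹ + (s ^ 2 * t)⁻¹ + (s * t ^ 2)⁻¹) := by
    field_simp
    ring
  have hsum : (s ^ 3)⁻¹ + (s ^ 2 * t)⁻¹ + (s * t ^ 2)⁻¹ ≤ 3 * (d ^ 3)⁻¹ := by
    calc _ ≤ (d ^ 3)⁻¹ + (d ^ 2 * d)⁻¹ + (d * d ^ 2)⁻¹ := by gcongr
      _ = 3 * (d ^ 3)⁻¹ := by ring
  have hts : |t - s| ≤ ‖a - b‖ := by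
    rw [abs_sub_comm]; exact abs_norm_sub_norm_le a b
  calc ‖(s ^ 3)⁻¹ • a - (t ^ 3)⁻¹ • b‖
      ≤ (s ^ 3)⁻¹ * ‖a - b‖ + |((s ^ 3)⁻¹ - (t ^ 3)⁻¹) * t| := by
        rw [hsplit, abs_mul, abs_of_pos ht]
        refine (norm_add_le _ _).trans_eq ?_
        rw [norm_smul, norm_smul, Real.norm_of_nonneg (by positivity), Real.norm_eq_abs]
    _ ≤ (d ^ 3)⁻¹ * ‖a - b‖ + ‖a - b‖ * (3 * (d ^ 3)⁻¹) := by
        rw [hfactor, abs_mul, abs_of_pos (a := _ + _) (by positivity)]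
        gcongr
    _ = 4 / d ^ 3 * ‖a - b‖ := by ring

end InverseSquareKernel

section BilinearIntegral

variable {α E F G : Type*} [MeasurableSpace α] {μ : Measure α}
  [NormedAddCommGroup E] [NormedSpace ℝ E] [NormedAddCommGroup F] [NormedSpace ℝ F]
  [NormedAddCommGroup G] [NormedSpace ℝ G] (B : E →L[ℝ] F →L[ℝ] G) {k k' : α → E} {f : α → F}

theorem integrable_bilinear_of_norm_le {M : ℝ} (hk : AEStronglyMeasurable k μ)
    (hf : Integrable f μ) (hkf : ∀ y, f y ≠ 0 → ‖k y‖ ≤ M) :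
    Integrable (fun y => B (k y) (f y)) μ := by
  refine (hf.norm.const_mul (‖B‖ * M)).mono' (B.continuous₂.comp_aestronglyMeasurable₂ hk hf.1)
    (ae_of_all _ fun y => ?_)
  rcases eq_or_ne (f y) 0 with hy | hy
  · simp [hy]
  calc ‖B (k y) (f y)‖ ≤ ‖B‖ * ‖k y‖ * ‖f y‖ := B.le_opNorm₂ _ _
    _ ≤ ‖B‖ * M * ‖f y‖ := by gcongr; exact hkf y hy

theorem norm_integral_bilinear_sub_le {δ : ℝ} (hk : Integrable (fun y => B (k y) (f y)) μ)
    (hk' : Integrable (fun y => B (k' y) (f y)) μ) (hf : Integrable f μ)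
    (hkf : ∀ y, f y ≠ 0 → ‖k y - k' y‖ ≤ δ) :
    ‖∫ y, B (k y) (f y) ∂μ - ∫ y, B (k' y) (f y) ∂μ‖ ≤ ‖B‖ * δ * ∫ y, ‖f y‖ ∂μ := by
  rw [← integral_sub hk hk', ← integral_const_mul]
  refine norm_integral_le_of_norm_le (hf.norm.const_mul _) (ae_of_all _ fun y => ?_)
  rcases eq_or_ne (f y) 0 with hy | hy
  · simp [hy]
  calc ‖B (k y) (f y) - B (k' y) (f y)‖ = ‖B (k y - k' y) (f y)‖ := by simp
    _ ≤ ‖B‖ * ‖k y - k' y‖ * ‖f y‖ := B.le_opNorm₂ _ _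
    _ ≤ ‖B‖ * δ * ‖f y‖ := by gcongr; exact hkf y hy

end BilinearIntegral

theorem sub_le_dist_of_mem_ball_of_notMem_ball {X : Type*} [PseudoMetricSpace X] {x0 x y : X}
    {r0 r1 : ℝ} (hx : x ∈ ball x0 r0) (hy : y ∉ ball x0 r1) : r1 - r0 ≤ dist x y := by
  rw [mem_ball] at hx hy
  linarith [dist_triangle y x x0, dist_comm x y]

section InverseSquarePotential

variable {E F G : Type*} [NormedAddCommGroup E] [NormedSpace ℝ E] [MeasurableSpace E]
  [BorelSpace E] [SecondCountableTopology E] {μ : Measure E}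
  [NormedAddCommGroup F] [NormedSpace ℝ F] [NormedAddCommGroup G] [NormedSpace ℝ G]
  (B : E →L[ℝ] F →L[ℝ] G) {f : E → F} {x0 x x' : E} {r0 r1 : ℝ}

theorem integrable_bilinear_inverseSquare (hr : r0 < r1) (hf : Integrable f μ)
    (hf0 : ∀ y ∈ ball x0 r1, f y = 0) (hx : x ∈ ball x0 r0) :
    Integrable (fun y => B ((‖x - y‖ ^ 3)⁻¹ • (x - y)) (f y)) μ := by
  refine integrable_bilinear_of_norm_le B (by fun_prop) hf (M := ((r1 - r0) ^ 2)⁻¹) fun y hy => ?_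
  have hd := sub_le_dist_of_mem_ball_of_notMem_ball hx fun h => hy (hf0 y h)
  rw [norm_inv_norm_pow_three_smul, ← dist_eq_norm]
  gcongr

theorem dist_integral_bilinear_inverseSquare_le (hr : r0 < r1) (hf : Integrable f μ)
    (hf0 : ∀ y ∈ ball x0 r1, f y = 0) (hx : x ∈ ball x0 r0) (hx' : x' ∈ ball x0 r0) :
    dist (∫ y, B ((‖x - y‖ ^ 3)⁻¹ • (x - y)) (f y) ∂μ)
        (∫ y, B ((‖x' - y‖ ^ 3)⁻¹ • (x' - y)) (f y) ∂μ)
      ≤ ‖B‖ * (4 / (r1 - r0) ^ 3) * (∫ y, ‖f y‖ ∂μ) * dist x x' := by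
  rw [dist_eq_norm, mul_right_comm _ _ (dist x x'), mul_assoc ‖B‖]
  refine norm_integral_bilinear_sub_le B (integrable_bilinear_inverseSquare B hr hf hf0 hx)
    (integrable_bilinear_inverseSquare B hr hf hf0 hx') hf fun y hy => ?_
  have hy' : y ∉ ball x0 r1 := fun h => hy (hf0 y h)
  have hd := sub_le_dist_of_mem_ball_of_notMem_ball hx hy'
  have hd' := sub_le_dist_of_mem_ball_of_notMem_ball hx' hy'
  rw [dist_eq_norm] at hd hd'
  simpa [dist_eq_norm] using
    norm_inv_norm_pow_three_smul_sub_le (sub_pos.2 hr) hd hd'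

end InverseSquarePotential

section L2Pairing

variable {α E F G : Type*} [MeasurableSpace α] {μ : Measure α} [NormedAddCommGroup E]
  [NormedSpace ℝ E] [NormedAddCommGroup F] [NormedSpace ℝ F] [NormedAddCommGroup G]
  [NormedSpace ℝ G] (C : E →L[ℝ] F →L[ℝ] G) {g : α → E} {u : α → F}

theorem integral_norm_bilinear_le {s : Set α} (hg : MemLp g 2 μ) (hu : MemLp u 2 μ)
    (hgs : ∀ y ∉ s, g y = 0) :
    ∫ y, ‖C (g y) (u y)‖ ∂μ ≤ ‖C‖ *
      ((∫ y in s, ‖g y‖ ^ 2 ∂μ) ^ ((1 : ℝ) / 2) * (∫ y in s, ‖u y‖ ^ 2 ∂μ) ^ ((1 : ℝ) / 2)) := by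
  have hholder := integral_mul_norm_le_Lp_mul_Lq (μ := μ.restrict s) Real.HolderConjugate.two_two
    (by simpa using hg.norm.restrict s) (by simpa using hu.norm.restrict s)
  simp only [Real.rpow_two, norm_norm] at hholder
  calc ∫ y, ‖C (g y) (u y)‖ ∂μ ≤ ∫ y, ‖C‖ * (‖g y‖ * ‖u y‖) ∂μ :=
        integral_mono (memLp_one_iff_integrable.1 (C.memLp_of_bilin 1 hg hu)).norm
          ((hg.norm.integrable_mul hu.norm).const_mul _)
          fun y => (C.le_opNorm₂ _ _).trans_eq (mul_assoc _ _ _)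
    _ = ‖C‖ * ∫ y in s, ‖g y‖ * ‖u y‖ ∂μ := by
        rw [integral_const_mul,
          setIntegral_eq_integral_of_forall_compl_eq_zero fun y hy => by simp [hgs y hy]]
    _ ≤ _ := by gcongr

end L2Pairing

section L2InverseSquarePotential

variable {E E₁ E₂ F G : Type*} [NormedAddCommGroup E] [NormedSpace ℝ E] [MeasurableSpace E]
  [BorelSpace E] [SecondCountableTopology E] {μ : Measure E}
  [NormedAddCommGroup E₁] [NormedSpace ℝ E₁] [NormedAddCommGroup E₂] [NormedSpace ℝ E₂]
  [NormedAddCommGroup F] [NormedSpace ℝ F] [NormedAddCommGroup G] [NormedSpace ℝ G]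
  (B : E →L[ℝ] F →L[ℝ] G) (C : E₁ →L[ℝ] E₂ →L[ℝ] F) {g : E → E₁} {u : E → E₂}
  {x0 x x' : E} {r0 r1 : ℝ}

theorem integrable_bilinear_inverseSquare_of_memLp (hr : r0 < r1) (hg : MemLp g 2 μ)
    (hu : MemLp u 2 μ) (hg0 : ∀ y ∈ ball x0 r1, g y = 0) (hx : x ∈ ball x0 r0) :
    Integrable (fun y => B ((‖x - y‖ ^ 3)⁻¹ • (x - y)) (C (g y) (u y))) μ :=
  integrable_bilinear_inverseSquare B hr (memLp_one_iff_integrable.1 (C.memLp_of_bilin 1 hg hu))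
    (fun y hy => by simp [hg0 y hy]) hx

theorem dist_integral_bilinear_inverseSquare_le_of_memLp {s : Set E} (hr : r0 < r1)
    (hg : MemLp g 2 μ) (hu : MemLp u 2 μ) (hg0 : ∀ y ∈ ball x0 r1, g y = 0)
    (hgs : ∀ y ∉ s, g y = 0) (hx : x ∈ ball x0 r0) (hx' : x' ∈ ball x0 r0) :
    dist (∫ y, B ((‖x - y‖ ^ 3)⁻¹ • (x - y)) (C (g y) (u y)) ∂μ)
        (∫ y, B ((‖x' - y‖ ^ 3)⁻¹ • (x' - y)) (C (g y) (u y)) ∂μ)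
      ≤ ‖B‖ * (4 / (r1 - r0) ^ 3) * (‖C‖ *
        ((∫ y in s, ‖g y‖ ^ 2 ∂μ) ^ ((1 : ℝ) / 2) * (∫ y in s, ‖u y‖ ^ 2 ∂μ) ^ ((1 : ℝ) / 2)))
        * dist x x' := by
  have hf := memLp_one_iff_integrable.1 (C.memLp_of_bilin 1 hg hu)
  refine (dist_integral_bilinear_inverseSquare_le B hr hf (fun y hy => by simp [hg0 y hy])
    hx hx').trans ?_
  have hd := sub_pos.2 hr
  gcongr
  exact integral_norm_bilinear_le C hg hu hgs

end L2InverseSquarePotential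

theorem cross3_eq_crossProduct (a b : E3) :
    cross3 a b = WithLp.toLp 2 (crossProduct (WithLp.ofLp a) (WithLp.ofLp b)) := by
  rw [cross_apply]; rfl

theorem norm_cross3_sq_add_inner_sq (a b : E3) :
    ‖cross3 a b‖ ^ 2 + ⟪a, b⟫ ^ 2 = ‖a‖ ^ 2 * ‖b‖ ^ 2 := by
  simp only [← real_inner_self_eq_norm_sq, EuclideanSpace.inner_eq_star_dotProduct,
    cross3_eq_crossProduct, star_trivial, cross_dot_cross, dotProduct_comm (WithLp.ofLp a)]
  ring

theorem norm_cross3_le (a b : E3) : ‖cross3 a b‖ ≤ ‖a‖ * ‖b‖ := by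
  refine (pow_le_pow_iff_left₀ (norm_nonneg _) (by positivity) two_ne_zero).1 ?_
  rw [mul_pow, ← norm_cross3_sq_add_inner_sq]
  exact le_add_of_nonneg_right (sq_nonneg _)

def cross3L : E3 →L[ℝ] E3 →L[ℝ] E3 :=
  LinearMap.mkContinuous₂
    ((crossProduct.compl₁₂ (WithLp.linearEquiv 2 ℝ (Fin 3 → ℝ)).toLinearMap
      (WithLp.linearEquiv 2 ℝ (Fin 3 → ℝ)).toLinearMap).compr₂
      (WithLp.linearEquiv 2 ℝ (Fin 3 → ℝ)).symm.toLinearMap) 1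
    fun a b => by simpa [← cross3_eq_crossProduct] using norm_cross3_le a b

@[simp]
theorem cross3L_apply (a b : E3) : cross3L a b = cross3 a b :=
  (cross3_eq_crossProduct a b).symm

theorem norm_cross3L_le : ‖cross3L‖ ≤ 1 :=
  LinearMap.mkContinuous₂_norm_le _ zero_le_one _

theorem harmCorr_lipschitzOnWith_general
    (ρ0 ρ1 ρ : ℝ) (h1 : ρ0 < ρ1) :
    ∃ C > (0 : ℝ),
      ∀ (x0 : E3) (ψ : E3 → ℝ) (u : E3 → E3),
        ContDiff ℝ (⊤ : ℕ∞) ψ → HasCompactSupport ψ →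
        tsupport ψ ⊆ Metric.ball x0 ρ →
        (∀ x ∈ Metric.ball x0 ρ1, gradient ψ x = 0) →
        MemLp u 2 (volume : Measure E3) →
        (∀ x ∈ Metric.ball x0 ρ0,
            Integrable (fun y : E3 => ((‖x - y‖ ^ 3)⁻¹ * ⟪u y, gradient ψ y⟫) • (x - y)) ∧
            Integrable (fun y : E3 =>
              cross3 ((‖x - y‖ ^ 3)⁻¹ • (x - y)) (cross3 (gradient ψ y) (u y)))) ∧
        LipschitzOnWith
          (Real.toNNReal (C
            * (∫ y in Metric.ball x0 ρ, ‖gradient ψ y‖ ^ 2) ^ ((1 : ℝ) / 2)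
            * (∫ y in Metric.ball x0 ρ, ‖u y‖ ^ 2) ^ ((1 : ℝ) / 2)))
          (harmCorr ψ u) (Metric.ball x0 ρ0) := by
  have hd : 0 < ρ1 - ρ0 := sub_pos.2 h1
  refine ⟨2 / (Real.pi * (ρ1 - ρ0) ^ 3), by positivity, fun x0 ψ u hψ hcs hsupp hgrad hu => ?_⟩
  have hψ2 : MemLp (gradient ψ) 2 volume :=
    (hψ.continuous_gradient (by simp)).memLp_of_hasCompactSupport hcs.gradient
  have hψρ : ∀ y ∉ ball x0 ρ, gradient ψ y = 0 := fun y hy =>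
    Function.notMem_support.1 fun h => hy (hsupp (support_gradient_subset ψ h))
  have hsmul (x y : E3) : ((‖x - y‖ ^ 3)⁻¹ * ⟪u y, gradient ψ y⟫) • (x - y) =
      (ContinuousLinearMap.lsmul ℝ ℝ).flip ((‖x - y‖ ^ 3)⁻¹ • (x - y))
        (innerSL ℝ (gradient ψ y) (u y)) := by
    simp [smul_smul]
  unfold harmCorr
  simp only [hsmul, ← cross3L_apply]
  refine ⟨fun x hx => ⟨integrable_bilinear_inverseSquare_of_memLp _ _ h1 hψ2 hu hgrad hx,
    integrable_bilinear_inverseSquare_of_memLp _ _ h1 hψ2 hu hgrad hx⟩,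
    LipschitzOnWith.of_dist_le' fun x hx x' hx' => ?_⟩
  have hB₁ : ‖(ContinuousLinearMap.lsmul ℝ ℝ (E := E3)).flip‖ ≤ 1 :=
    (ContinuousLinearMap.opNorm_flip _).trans_le ContinuousLinearMap.opNorm_lsmul_le
  have hC₁ : ‖innerSL ℝ (E := E3)‖ ≤ 1 := norm_innerSL_le ℝ
  have hC₂ : ‖cross3L‖ ≤ 1 := norm_cross3L_le
  set A := (∫ y in ball x0 ρ, ‖gradient ψ y‖ ^ 2) ^ ((1 : ℝ) / 2)
  set U := (∫ y in ball x0 ρ, ‖u y‖ ^ 2) ^ ((1 : ℝ) / 2)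
  simp only [← smul_sub, dist_smul₀]
  calc _ ≤ ‖(4 * Real.pi)⁻¹‖ * (dist _ _ + dist _ _) := by gcongr; exact dist_sub_sub_le _ _ _ _
    _ ≤ ‖(4 * Real.pi)⁻¹‖ * (1 * (4 / (ρ1 - ρ0) ^ 3) * (1 * (A * U)) * dist x x'
          + 1 * (4 / (ρ1 - ρ0) ^ 3) * (1 * (A * U)) * dist x x') := by
        gcongr <;> refine le_trans
          (dist_integral_bilinear_inverseSquare_le_of_memLp _ _ h1 hψ2 hu hgrad hψρ hx hx') ?_ <;>
          gcongr
    _ = 2 / (Real.pi * (ρ1 - ρ0) ^ 3) * A * U * dist x x' := by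
        rw [Real.norm_of_nonneg (by positivity)]
        field_simp
        ring

/-- Proposition `Lemma_correctors` of the paper (stationary form): the harmonic
corrector `β` is Lipschitz on `B(x0, ρ0)` with constant
`C ‖∇ψ‖_{L²(B(x0,ρ))} ‖u‖_{L²(B(x0,ρ))}`, `C` depending only on `ρ0, ρ1, ρ`. -/
theorem harmCorr_lipschitzOnWith
    (ρ0 ρ1 ρ : ℝ) (h0 : 0 < ρ0) (h1 : ρ0 < ρ1) (h2 : ρ1 < ρ) :
    ∃ C > (0 : ℝ),
      ∀ (x0 : E3) (ψ : E3 → ℝ) (u : E3 → E3),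
        ContDiff ℝ (⊤ : ℕ∞) ψ → HasCompactSupport ψ →
        tsupport ψ ⊆ Metric.ball x0 ρ →
        (∀ x ∈ Metric.ball x0 ρ1, gradient ψ x = 0) →
        MemLp u 2 (volume : Measure E3) →
        (∀ x ∈ Metric.ball x0 ρ0,
            Integrable (fun y : E3 => ((‖x - y‖ ^ 3)⁻¹ * ⟪u y, gradient ψ y⟫) • (x - y)) ∧
            Integrable (fun y : E3 =>
              cross3 ((‖x - y‖ ^ 3)⁻¹ • (x - y)) (cross3 (gradient ψ y) (u y)))) ∧
        LipschitzOnWith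
          (Real.toNNReal (C
            * (∫ y in Metric.ball x0 ρ, ‖gradient ψ y‖ ^ 2) ^ ((1 : ℝ) / 2)
            * (∫ y in Metric.ball x0 ρ, ‖u y‖ ^ 2) ^ ((1 : ℝ) / 2)))
          (harmCorr ψ u) (Metric.ball x0 ρ0) :=
  harmCorr_lipschitzOnWith_general ρ0 ρ1 ρ h1
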